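/- For every formula A there exists an A-reducing mapping ℛ_A : 𝒫₁ × 𝒫₁ → 𝒫₁, i.e., a nonexpansive map such that ℛ_A(π′, π″) is an ∞-proof of Γ ⇒ Δ whenever π′ is an ∞-proof of Γ ⇒ Δ, A and π″ is an ∞-proof of A, Γ ⇒ Δ, both in 𝒫₁. -/

import Mathlib

/-- Modal formulas of the Grzegorczyk logic: ⊥, atoms, →, □. -/
inductive Formula : Type
  | bot : Formula
  | atom : ℕ → Formula
  | imp : Formula → Formula → Formula
  | box : Formula → Formula
deriving DecidableEq

/-- A sequent Γ ⇒ Δ is a pair of finite multisets of formulas. -/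
abbrev Sequent : Type := Multiset Formula × Multiset Formula

/-- Names of the inference rules of Grz∞ + cut (including the two kinds of initial sequents). -/
inductive Rule : Type
  | ax | axBot | impL | impR | refl | box | cut
deriving DecidableEq

/-- □Π for a multiset Π. -/
def boxed (P : Multiset Formula) : Multiset Formula := P.map Formula.box

/-- `Inst r s p₁ p₂` : the rule `r` has a (correct) instance with conclusion `s`,
first premise `p₁` and second premise `p₂` (`none` = no such premise). -/
inductive Inst : Rule → Sequent → Option Sequent → Option Sequent → Prop
  | ax (Γ Δ : Multiset Formula) (p : ℕ) :
      Inst .ax (Formula.atom p ::ₘ Γ, Formula.atom p ::ₘ Δ) none none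
  | axBot (Γ Δ : Multiset Formula) :
      Inst .axBot (Formula.bot ::ₘ Γ, Δ) none none
  | impL (Γ Δ : Multiset Formula) (A B : Formula) :
      Inst .impL (Formula.imp A B ::ₘ Γ, Δ) (some (B ::ₘ Γ, Δ)) (some (Γ, A ::ₘ Δ))
  | impR (Γ Δ : Multiset Formula) (A B : Formula) :
      Inst .impR (Γ, Formula.imp A B ::ₘ Δ) (some (A ::ₘ Γ, B ::ₘ Δ)) none
  | refl (Γ Δ : Multiset Formula) (A : Formula) :
      Inst .refl (Formula.box A ::ₘ Γ, Δ) (some (A ::ₘ Formula.box A ::ₘ Γ, Δ)) none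
  | box (Γ Δ : Multiset Formula) (A : Formula) (P : Multiset Formula) :
      Inst .box (Γ + boxed P, Formula.box A ::ₘ Δ) (some (Γ + boxed P, A ::ₘ Δ))
        (some (boxed P, {A}))
  | cut (Γ Δ : Multiset Formula) (A : Formula) :
      Inst .cut (Γ, Δ) (some (Γ, A ::ₘ Δ)) (some (A ::ₘ Γ, Δ))

/-- A labelling of tree addresses (lists of booleans; `true` = second/right child)
by a rule name together with a sequent; `none` means the address is outside the tree. -/
abbrev Lab : Type := List Bool → Option (Rule × Sequent)

/-- The labelling of the subtree at child `i`. -/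
def shift (i : Bool) (l : Lab) : Lab := fun a => l (i :: a)

/-- An ∞-proof in Grz∞ + cut: a possibly infinite tree of sequents built according to
the rules, in which every infinite branch passes through the right premise of the
rule (□) infinitely many times. -/
structure InfProof : Type where
  lab : Lab
  root_some : (lab []).isSome
  nojunk : ∀ (a : List Bool) (i : Bool), lab a = none → lab (a ++ [i]) = none
  step : ∀ (a : List Bool) (r : Rule) (s : Sequent), lab a = some (r, s) →
      Inst r s ((lab (a ++ [false])).map Prod.snd) ((lab (a ++ [true])).map Prod.snd)
  branch : ∀ f : ℕ → Bool, (∀ n : ℕ, (lab ((List.range n).map f)).isSome) →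
      ∀ N : ℕ, ∃ n : ℕ, N ≤ n ∧ f n = true ∧
        (lab ((List.range n).map f)).map Prod.fst = some Rule.box

/-- The sequent at the root of an ∞-proof. -/
def rootSeq (π : InfProof) : Sequent := ((π.lab []).map Prod.snd).getD (0, 0)

/-- `Proves π S` : the ∞-proof `π` is an ∞-proof of the sequent `S`. -/
def Proves (π : InfProof) (S : Sequent) : Prop := ∃ r : Rule, π.lab [] = some (r, S)

/-- An ∞-proof contains no application of the cut rule (i.e. it is a proof of Grz∞). -/
def NoCut (π : InfProof) : Prop := ∀ (a : List Bool) (r : Rule) (s : Sequent),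
  π.lab a = some (r, s) → r ≠ Rule.cut

/-- Membership of an address in the main fragment: no proper passage through a
right premise of (□) strictly below it. -/
def InMain (l : Lab) (a : List Bool) : Prop :=
  (l a).isSome ∧ ∀ (b c : List Bool), a = b ++ true :: c →
    (l b).map Prod.fst = some Rule.box → c = []

/-- The local height |π| : the length of the longest branch in the main fragment. -/
noncomputable def height (l : Lab) : ℕ := sSup {n : ℕ | ∃ a : List Bool, InMain l a ∧ a.length = n}

/-- The relations ∼ₙ on ∞-proofs (presented on labellings), defined inductively:
π ∼₀ τ always; a single-node proof is ∼ₙ-related to itself; proofs ending in the same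
instance of (→L), (cut), (→R), (refl) are ∼ₙ-related when their immediate subproofs are;
proofs ending in the same instance of (□) are ∼ₙ₊₁-related when the left-premise subproofs
are ∼ₙ₊₁-related and the right-premise subproofs are ∼ₙ-related. -/
inductive Sim : ℕ → Lab → Lab → Prop
  | zero (l m : Lab) : Sim 0 l m
  | leaf (n : ℕ) (l : Lab) : height l = 0 → Sim n l l
  | bin (n : ℕ) (l m : Lab) (r : Rule) (s : Sequent) :
      (r = Rule.impL ∨ r = Rule.cut) →
      l [] = some (r, s) → m [] = some (r, s) →
      (l [false]).map Prod.snd = (m [false]).map Prod.snd →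
      (l [true]).map Prod.snd = (m [true]).map Prod.snd →
      Sim n (shift false l) (shift false m) → Sim n (shift true l) (shift true m) →
      Sim n l m
  | un (n : ℕ) (l m : Lab) (r : Rule) (s : Sequent) :
      (r = Rule.impR ∨ r = Rule.refl) →
      l [] = some (r, s) → m [] = some (r, s) →
      (l [false]).map Prod.snd = (m [false]).map Prod.snd →
      Sim n (shift false l) (shift false m) →
      Sim n l m
  | box (n : ℕ) (l m : Lab) (s : Sequent) :
      l [] = some (Rule.box, s) → m [] = some (Rule.box, s) →
      (l [false]).map Prod.snd = (m [false]).map Prod.snd →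
      (l [true]).map Prod.snd = (m [true]).map Prod.snd →
      Sim (n + 1) (shift false l) (shift false m) → Sim n (shift true l) (shift true m) →
      Sim (n + 1) l m

/-- The sets 𝒫ₙ of ∞-proofs (presented on labellings), defined inductively:
𝒫₀ is everything; single-node proofs are in every 𝒫ₙ; (→L), (→R), (refl) preserve
membership in 𝒫ₙ; a proof ending in (□) with left-premise subproof in 𝒫ₙ₊₁ and
right-premise subproof in 𝒫ₙ is in 𝒫ₙ₊₁. -/
inductive MemP : ℕ → Lab → Prop
  | zero (l : Lab) : MemP 0 l
  | leaf (n : ℕ) (l : Lab) : height l = 0 → MemP n l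
  | bin (n : ℕ) (l : Lab) (s : Sequent) :
      l [] = some (Rule.impL, s) →
      MemP n (shift false l) → MemP n (shift true l) → MemP n l
  | un (n : ℕ) (l : Lab) (r : Rule) (s : Sequent) :
      (r = Rule.impR ∨ r = Rule.refl) →
      l [] = some (r, s) → MemP n (shift false l) → MemP n l
  | box (n : ℕ) (l : Lab) (s : Sequent) :
      l [] = some (Rule.box, s) →
      MemP (n + 1) (shift false l) → MemP n (shift true l) → MemP (n + 1) l

/- The metric d(π,τ) = 2^(−sup{n : π ∼ₙ τ}), with 2^(−∞) = 0. -/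
open Classical in
noncomputable def pdist (π τ : InfProof) : ℝ :=
  if ∀ n : ℕ, Sim n π.lab τ.lab then 0
  else (2 : ℝ) ^ (-((sSup {n : ℕ | Sim n π.lab τ.lab} : ℕ) : ℤ))

/-- A mapping on ∞-proofs is nonexpansive if it preserves all relations ∼ₙ. -/
def Nonexpansive (f : InfProof → InfProof) : Prop :=
  ∀ (n : ℕ) (π τ : InfProof), Sim n π.lab τ.lab → Sim n (f π).lab (f τ).lab

/-- A mapping is adequate if it is nonexpansive, maps 𝒫₁ into 𝒫₁,
and does not increase local height. -/
def Adequate (f : InfProof → InfProof) : Prop :=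
  Nonexpansive f ∧ (∀ π : InfProof, MemP 1 π.lab → MemP 1 (f π).lab) ∧
    ∀ π : InfProof, height (f π).lab ≤ height π.lab

/-- The set 𝒫₁ of ∞-proofs whose main fragment is cut-free, as a subtype. -/
abbrev P1 : Type := {π : InfProof // MemP 1 π.lab}

/-- An A-reducing mapping: a nonexpansive map ℛ : 𝒫₁ × 𝒫₁ → 𝒫₁ such that
ℛ(π′,π″) proves Γ ⇒ Δ whenever π′ proves Γ ⇒ Δ, A and π″ proves A, Γ ⇒ Δ. -/
def Reducing (A : Formula) (R : P1 → P1 → P1) : Prop :=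
  (∀ (n : ℕ) (p₁ p₂ q₁ q₂ : P1), Sim n p₁.1.lab q₁.1.lab → Sim n p₂.1.lab q₂.1.lab →
      Sim n (R p₁ p₂).1.lab (R q₁ q₂).1.lab) ∧
  ∀ (p₁ p₂ : P1) (Γ Δ : Multiset Formula),
    Proves p₁.1 (Γ, A ::ₘ Δ) → Proves p₂.1 (A ::ₘ Γ, Δ) → Proves (R p₁ p₂).1 (Γ, Δ)

/-- A mapping is root-preserving if it maps ∞-proofs to ∞-proofs of the same sequent. -/
def RootPres (f : InfProof → InfProof) : Prop :=
  ∀ (π : InfProof) (S : Sequent), Proves π S → Proves (f π) S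

/-- The uniform distance on mappings of ∞-proofs. -/
noncomputable def udist (U V : InfProof → InfProof) : ℝ :=
  ⨆ π : InfProof, pdist (U π) (V π)

/- The immediate subproof of `π` at child `i` (junk value `π` if there is none). -/
open Classical in
noncomputable def subtree (π : InfProof) (i : Bool) : InfProof :=
  if h : ∃ τ : InfProof, τ.lab = shift i π.lab then h.choose else π

/-- `IsFOp E F` : `F` is the operator ℱ (relative to the one-step cut-elimination map
`E` = ℰ*) defined by: on proofs with cut-free main fragment it commutes with the last
rule, applying `U` at right premises of (□) and fixing single-node proofs; on other
proofs it first applies `E`. -/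
def IsFOp (E : InfProof → InfProof) (F : (InfProof → InfProof) → InfProof → InfProof) : Prop :=
  ∀ (U : InfProof → InfProof) (π : InfProof),
    (MemP 1 π.lab → height π.lab = 0 → F U π = π) ∧
    (∀ (r : Rule) (s : Sequent), MemP 1 π.lab → π.lab [] = some (r, s) →
        r ≠ Rule.box → r ≠ Rule.cut → height π.lab ≠ 0 →
        (F U π).lab [] = some (r, s) ∧
        shift false (F U π).lab = (F U (subtree π false)).lab ∧
        (r = Rule.impL → shift true (F U π).lab = (F U (subtree π true)).lab)) ∧
    (∀ s : Sequent, MemP 1 π.lab → π.lab [] = some (Rule.box, s) →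
        (F U π).lab [] = some (Rule.box, s) ∧
        shift false (F U π).lab = (F U (subtree π false)).lab ∧
        shift true (F U π).lab = (U (subtree π true)).lab) ∧
    (¬ MemP 1 π.lab → F U π = F U (E π))

/-- Membership in 𝒩ₙ : a root-preserving nonexpansive map whose image lies in 𝒫ₙ. -/
def InN (n : ℕ) (U : InfProof → InfProof) : Prop :=
  Nonexpansive U ∧ RootPres U ∧ ∀ π : InfProof, MemP n (U π).lab

/-- The finitary sequent calculus Grz_Seq (with cut allowed iff the flag is `true`). -/
inductive GrzSeq : Bool → Sequent → Prop
  | ax (c : Bool) (Γ Δ : Multiset Formula) (A : Formula) :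
      GrzSeq c (A ::ₘ Γ, A ::ₘ Δ)
  | bot (c : Bool) (Γ Δ : Multiset Formula) :
      GrzSeq c (Formula.bot ::ₘ Γ, Δ)
  | impL (c : Bool) (Γ Δ : Multiset Formula) (A B : Formula) :
      GrzSeq c (B ::ₘ Γ, Δ) → GrzSeq c (Γ, A ::ₘ Δ) →
      GrzSeq c (Formula.imp A B ::ₘ Γ, Δ)
  | impR (c : Bool) (Γ Δ : Multiset Formula) (A B : Formula) :
      GrzSeq c (A ::ₘ Γ, B ::ₘ Δ) → GrzSeq c (Γ, Formula.imp A B ::ₘ Δ)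
  | refl (c : Bool) (Γ Δ : Multiset Formula) (B : Formula) :
      GrzSeq c (B ::ₘ Formula.box B ::ₘ Γ, Δ) → GrzSeq c (Formula.box B ::ₘ Γ, Δ)
  | grz (c : Bool) (Γ Δ : Multiset Formula) (A : Formula) (P : Multiset Formula) :
      GrzSeq c (Formula.box (Formula.imp A (Formula.box A)) ::ₘ boxed P, {A}) →
      GrzSeq c (Γ + boxed P, Formula.box A ::ₘ Δ)
  | cut (Γ Δ : Multiset Formula) (A : Formula) :
      GrzSeq true (Γ, A ::ₘ Δ) → GrzSeq true (A ::ₘ Γ, Δ) → GrzSeq true (Γ, Δ)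


/-! Cut is admissible in 𝒫₁, by a detour through Kripke semantics on finite partial orders.
Every ∞-proof is sound for it; conversely, backward proof search that applies (□) only when its
right premise `□P ⇒ A` is valid turns every valid sequent into a proof in 𝒫₁. So the conclusion
of a cut between proofs in 𝒫₁ has a canonical proof in 𝒫₁, depending only on the root sequent of
the left proof; since `π ∼ₙ₊₁ τ` forces equal roots and each `∼ₙ` is reflexive, this choice is
nonexpansive. -/

def LocallyCorrect (l : Lab) : Prop :=
  (∀ (a : List Bool) (i : Bool), l a = none → l (a ++ [i]) = none) ∧
  ∀ (a : List Bool) (r : Rule) (s : Sequent), l a = some (r, s) →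
    Inst r s ((l (a ++ [false])).map Prod.snd) ((l (a ++ [true])).map Prod.snd)

theorem InfProof.locallyCorrect (π : InfProof) : LocallyCorrect π.lab := ⟨π.nojunk, π.step⟩

theorem LocallyCorrect.shift {l : Lab} (h : LocallyCorrect l) (i : Bool) :
    LocallyCorrect (shift i l) :=
  ⟨fun a => h.1 (i :: a), fun a => h.2 (i :: a)⟩

theorem LocallyCorrect.eq_none_append {l : Lab} (h : LocallyCorrect l) {a : List Bool}
    (ha : l a = none) (b : List Bool) : l (a ++ b) = none := by
  induction b using List.reverseRecOn with
  | nil => simpa using ha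
  | append_singleton b i ih => simpa using h.1 _ i ih

theorem Inst.premises_eq_none {r : Rule} {s : Sequent} {p₁ p₂ : Option Sequent}
    (h : Inst r s p₁ p₂) (hr : r = .ax ∨ r = .axBot) : p₁ = none ∧ p₂ = none := by
  cases h <;> simp_all

theorem height_eq_zero_of_forall_cons {l : Lab} (h : ∀ i a, l (i :: a) = none) :
    height l = 0 := by
  refine Nat.le_zero.mp (csSup_le' ?_)
  rintro n ⟨_ | ⟨i, a⟩, hmain, rfl⟩
  · rfl
  · simp [InMain, h] at hmain

theorem LocallyCorrect.height_eq_zero {l : Lab} (hl : LocallyCorrect l)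
    (hf : l [false] = none) (ht : l [true] = none) : height l = 0 :=
  height_eq_zero_of_forall_cons fun i a => by
    cases i
    · exact hl.eq_none_append hf a
    · exact hl.eq_none_append ht a

theorem InMain.cons_of_shift {l : Lab} {i : Bool} {b : List Bool} (h : InMain (shift i l) b)
    (hi : i = false ∨ (l []).map Prod.fst ≠ some Rule.box) : InMain l (i :: b) := by
  refine ⟨h.1, fun b' c hbc hbox => ?_⟩
  cases b' with
  | nil =>
    obtain ⟨rfl, rfl⟩ := List.cons.inj hbc
    simp_all
  | cons j b' =>
    obtain ⟨rfl, hb⟩ := List.cons.inj hbc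
    exact h.2 b' c hb hbox

theorem bddAbove_of_height_ne_zero {l : Lab} (h : height l ≠ 0) :
    BddAbove {n : ℕ | ∃ a, InMain l a ∧ a.length = n} :=
  not_not.mp fun hb => h (Nat.sSup_of_not_bddAbove hb)

theorem exists_inMain_length_eq_height {l : Lab} (h : height l ≠ 0) :
    ∃ a, InMain l a ∧ a.length = height l := by
  refine Nat.sSup_mem (Set.nonempty_iff_ne_empty.mpr fun he => h ?_)
    (bddAbove_of_height_ne_zero h)
  simp only [height, he, csSup_empty]
  rfl

theorem length_le_height {l : Lab} (h : height l ≠ 0) {a : List Bool} (ha : InMain l a) :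
    a.length ≤ height l :=
  le_csSup (bddAbove_of_height_ne_zero h) ⟨a, ha, rfl⟩

theorem height_shift_lt {l : Lab} {i : Bool} (h : height l ≠ 0)
    (hi : i = false ∨ (l []).map Prod.fst ≠ some Rule.box) :
    height (shift i l) < height l := by
  by_cases h' : height (shift i l) = 0
  · exact h' ▸ Nat.pos_of_ne_zero h
  obtain ⟨b, hb, hlen⟩ := exists_inMain_length_eq_height h'
  have := length_le_height h (hb.cons_of_shift hi)
  simp only [List.length_cons] at this
  omega

theorem sim_refl {l : Lab} (hl : LocallyCorrect l) (n : ℕ) : Sim n l l := by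
  induction n generalizing l with
  | zero => exact .zero l l
  | succ n ihn =>
    induction hk : height l using Nat.strong_induction_on generalizing l with
    | _ k ihk =>
    -- `height l = 0` includes the junk value of an unbounded main fragment; otherwise the
    -- height is attained and drops at every child in the main fragment
    by_cases h0 : height l = 0
    · exact .leaf _ l h0
    obtain ⟨⟨r, s⟩, hr⟩ : ∃ x, l [] = some x := by
      refine Option.ne_none_iff_exists'.mp fun hnone => h0 ?_
      exact height_eq_zero_of_forall_cons fun i a => hl.eq_none_append hnone (i :: a)
    have hchild (i : Bool) (hi : i = false ∨ r ≠ .box) : Sim (n + 1) (shift i l) (shift i l) :=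
      ihk _ (hk ▸ height_shift_lt h0 (by simpa [hr] using hi)) (hl.shift i) rfl
    have hleaf (hax : r = .ax ∨ r = .axBot) : False := by
      obtain ⟨hf, ht⟩ := (hl.2 [] r s hr).premises_eq_none hax
      exact h0 (hl.height_eq_zero (by simpa using hf) (by simpa using ht))
    cases r with
    | ax => exact (hleaf (.inl rfl)).elim
    | axBot => exact (hleaf (.inr rfl)).elim
    | impL =>
      exact .bin _ l l _ s (.inl rfl) hr hr rfl rfl (hchild false (.inl rfl))
        (hchild true (.inr nofun))
    | cut =>
      exact .bin _ l l _ s (.inr rfl) hr hr rfl rfl (hchild false (.inl rfl))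
        (hchild true (.inr nofun))
    | impR => exact .un _ l l _ s (.inl rfl) hr hr rfl (hchild false (.inl rfl))
    | refl => exact .un _ l l _ s (.inr rfl) hr hr rfl (hchild false (.inl rfl))
    | box => exact .box n l l s hr hr rfl rfl (hchild false (.inl rfl)) (ihn (hl.shift true))

theorem Sim.root_eq {n : ℕ} {l m : Lab} (h : Sim (n + 1) l m) : l [] = m [] := by
  cases h with
  | leaf => rfl
  | bin _ _ _ _ _ _ h₁ h₂ | un _ _ _ _ _ _ h₁ h₂ | box _ _ _ _ h₁ h₂ => rw [h₁, h₂]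

def Holds {W : Type} [LE W] (val : ℕ → W → Prop) : Formula → W → Prop
  | .bot, _ => False
  | .atom p, w => val p w
  | .imp A B, w => Holds val A w → Holds val B w
  | .box A, w => ∀ v, w ≤ v → Holds val A v

def FailsAt {W : Type} [LE W] (val : ℕ → W → Prop) (S : Sequent) (w : W) : Prop :=
  (∀ A ∈ S.1, Holds val A w) ∧ ∀ B ∈ S.2, ¬ Holds val B w

def Valid (S : Sequent) : Prop :=
  ∀ (W : Type) [PartialOrder W] [Finite W] (val : ℕ → W → Prop) (w : W), ¬ FailsAt val S w

section Semantics

variable {W : Type} {val : ℕ → W → Prop}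

@[simp]
theorem failsAt_cons_left [LE W] {A : Formula} {Γ Δ : Multiset Formula} {w : W} :
    FailsAt val (A ::ₘ Γ, Δ) w ↔ Holds val A w ∧ FailsAt val (Γ, Δ) w := by
  simp [FailsAt, and_assoc]

@[simp]
theorem failsAt_cons_right [LE W] {B : Formula} {Γ Δ : Multiset Formula} {w : W} :
    FailsAt val (Γ, B ::ₘ Δ) w ↔ ¬ Holds val B w ∧ FailsAt val (Γ, Δ) w := by
  simp only [FailsAt, Multiset.forall_mem_cons]
  tauto

theorem holds_comp_iff {V : Type} [LE V] [LE W] (f : V → W)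
    (forth : ∀ u v, u ≤ v → f u ≤ f v) (back : ∀ v w, f v ≤ w → ∃ u, v ≤ u ∧ f u = w) :
    ∀ (A : Formula) (v : V), Holds (fun p u => val p (f u)) A v ↔ Holds val A (f v)
  | .bot, _ | .atom _, _ => Iff.rfl
  | .imp A B, v => imp_congr (holds_comp_iff f forth back A v) (holds_comp_iff f forth back B v)
  | .box A, v => by
    refine ⟨fun h w hw => ?_, fun h u hu => ?_⟩
    · obtain ⟨u, hu, rfl⟩ := back v w hw
      exact (holds_comp_iff f forth back A u).mp (h u hu)
    · exact (holds_comp_iff f forth back A u).mpr (h _ (forth v u hu))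

theorem exists_rooted_countermodel {S : Sequent} (h : ¬ Valid S) :
    ∃ (W : Type) (_ : PartialOrder W) (_ : Finite W) (val : ℕ → W → Prop) (w : W),
      (∀ v, w ≤ v) ∧ FailsAt val S w := by
  simp only [Valid, not_forall, not_not] at h
  obtain ⟨W, _, _, val, w, hw⟩ := h
  have htransfer := holds_comp_iff (val := val) (Subtype.val : {v // w ≤ v} → W)
    (fun _ _ => id) fun v u hvu => ⟨⟨u, v.2.trans hvu⟩, hvu, rfl⟩
  refine ⟨{v // w ≤ v}, inferInstance, inferInstance, fun p u => val p u, ⟨w, le_rfl⟩, fun v => v.2,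
    ?_, ?_⟩
  · exact fun A hA => (htransfer A _).mpr (hw.1 A hA)
  · exact fun B hB hB' => hw.2 B hB ((htransfer B _).mp hB')

end Semantics

theorem Inst.exists_failsAt_premise {W : Type} [PartialOrder W] {val : ℕ → W → Prop}
    {r : Rule} {s : Sequent} {p₁ p₂ : Option Sequent} (h : Inst r s p₁ p₂) {w : W}
    (hw : FailsAt val s w) :
    ∃ (i : Bool) (s' : Sequent) (w' : W), (bif i then p₂ else p₁) = some s' ∧
      FailsAt val s' w' ∧ w ≤ w' ∧ (i = true → r = .box → w < w') := by
  cases h with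
  | ax Γ Δ p => exact (hw.2 _ (Multiset.mem_cons_self ..) (hw.1 _ (Multiset.mem_cons_self ..))).elim
  | axBot Γ Δ => exact (hw.1 _ (Multiset.mem_cons_self ..)).elim
  | impL Γ Δ A B =>
    simp only [failsAt_cons_left, Holds] at hw
    by_cases hB : Holds val B w
    · exact ⟨false, _, w, rfl, by simp [hB, hw.2], le_rfl, nofun⟩
    · exact ⟨true, _, w, rfl, by simp [hw.2, mt hw.1 hB], le_rfl, nofun⟩
  | impR Γ Δ A B =>
    simp only [failsAt_cons_right, Holds, Classical.not_imp] at hw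
    exact ⟨false, _, w, rfl, by simp [hw], le_rfl, nofun⟩
  | refl Γ Δ A =>
    simp only [failsAt_cons_left] at hw
    exact ⟨false, _, w, rfl, by simp [hw, hw.1 w le_rfl], le_rfl, nofun⟩
  | box Γ Δ A P =>
    simp only [failsAt_cons_right, Holds, not_forall] at hw
    by_cases hA : Holds val A w
    · obtain ⟨⟨v, hwv, hAv⟩, hΓ, -⟩ := hw
      refine ⟨true, _, v, rfl, ⟨?_, by simpa using hAv⟩, hwv,
        fun _ _ => lt_of_le_of_ne hwv (by rintro rfl; exact hAv hA)⟩
      simp only [boxed, Multiset.mem_map]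
      rintro _ ⟨B, hB, rfl⟩ u hvu
      exact hΓ _ (Multiset.mem_add.mpr (.inr (Multiset.mem_map_of_mem _ hB))) u (hwv.trans hvu)
    · exact ⟨false, _, w, rfl, by simp [hA, hw.2], le_rfl, nofun⟩
  | cut Γ Δ A =>
    by_cases hA : Holds val A w
    · exact ⟨true, _, w, rfl, by simp [hA, hw], le_rfl, nofun⟩
    · exact ⟨false, _, w, rfl, by simp [hA, hw], le_rfl, nofun⟩

/-- Soundness: along the failing premises the point of the finite order never decreases and
strictly increases at each right premise of (□); by the branch condition this happens infinitely
often, which a finite partial order does not allow. -/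
theorem Proves.valid {π : InfProof} {S : Sequent} (h : Proves π S) : Valid S := by
  intro W _ _ val w₀ hw₀
  obtain ⟨r₀, h₀⟩ := h
  let Node := {x : List Bool × W // ∃ r s, π.lab x.1 = some (r, s) ∧ FailsAt val s x.2}
  have hsucc (x : Node) : ∃ (i : Bool) (y : Node), y.1.1 = x.1.1 ++ [i] ∧ x.1.2 ≤ y.1.2 ∧
      (i = true → (π.lab x.1.1).map Prod.fst = some .box → x.1.2 < y.1.2) := by
    obtain ⟨⟨a, w⟩, r, s, hr, hw⟩ := x
    obtain ⟨i, s', w', hs', hw', hle, hlt⟩ := (π.step a r s hr).exists_failsAt_premise hw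
    obtain ⟨⟨r', s''⟩, hr', rfl⟩ : ∃ x, π.lab (a ++ [i]) = some x ∧ x.2 = s' :=
      Option.map_eq_some_iff.mp (by cases i <;> exact hs')
    exact ⟨i, ⟨(a ++ [i], w'), r', _, hr', hw'⟩, rfl, hle,
      fun hi hbox => hlt hi (by simpa [hr] using hbox)⟩
  choose bit next hnext using hsucc
  let path : ℕ → Node := fun n => next^[n] ⟨([], w₀), r₀, S, h₀, hw₀⟩
  have hpath (n : ℕ) : path (n + 1) = next (path n) := Function.iterate_succ_apply' ..
  have haddr (n : ℕ) : (path n).1.1 = (List.range n).map (fun k => bit (path k)) := by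
    induction n with
    | zero => rfl
    | succ n ih => rw [hpath, (hnext _).1, ih, List.range_succ, List.map_append]; rfl
  have hmono : Monotone fun n => (path n).1.2 :=
    monotone_nat_of_le_succ fun n => hpath n ▸ (hnext _).2.1
  obtain ⟨N, hN⟩ := WellFoundedGT.monotone_chain_condition ⟨_, hmono⟩
  obtain ⟨n, hNn, hbit, hbox⟩ := π.branch (fun k => bit (path k))
    (fun n => by obtain ⟨r, s, hr, -⟩ := (path n).2; simp [← haddr, hr]) N
  have hlt := (hnext (path n)).2.2 hbit (by rwa [haddr])
  rw [← hpath] at hlt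
  have h₁ : (path N).1.2 = (path n).1.2 := hN n hNn
  have h₂ : (path N).1.2 = (path (n + 1)).1.2 := hN (n + 1) (by omega)
  exact hlt.ne (h₁.symm.trans h₂)

/-! `ForcedTrue L R C` (`ForcedFalse L R C`): the shape of `C` alone guarantees that `C` holds
(fails) wherever all of `L` hold and all of `R` fail. -/

mutual
def ForcedTrue (L R : Multiset Formula) : Formula → Prop
  | .bot => .bot ∈ L
  | .atom p => .atom p ∈ L
  | .imp A B => .imp A B ∈ L ∨ ForcedFalse L R A ∨ ForcedTrue L R B
  | .box A => .box A ∈ L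

def ForcedFalse (L R : Multiset Formula) : Formula → Prop
  | .bot => True
  | .atom p => .atom p ∈ R
  | .imp A B => .imp A B ∈ R ∨ ForcedTrue L R A ∧ ForcedFalse L R B
  | .box A => .box A ∈ R ∨ ForcedFalse L R A
end

section Forcing

variable {L R : Multiset Formula}

theorem forcedTrue_of_mem {C : Formula} (h : C ∈ L) : ForcedTrue L R C := by
  cases C <;> simp [ForcedTrue, h]

theorem forcedFalse_of_mem {C : Formula} (h : C ∈ R) : ForcedFalse L R C := by
  cases C <;> simp [ForcedFalse, h]

theorem forced_mono {L' R' : Multiset Formula} (hL : ∀ X ∈ L, ForcedTrue L' R' X)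
    (hR : ∀ X ∈ R, ForcedFalse L' R' X) :
    ∀ C, (ForcedTrue L R C → ForcedTrue L' R' C) ∧ (ForcedFalse L R C → ForcedFalse L' R' C)
  | .bot => ⟨hL _, fun _ => trivial⟩
  | .atom _ => ⟨hL _, hR _⟩
  | .imp A B => by
    have ihA := forced_mono hL hR A
    have ihB := forced_mono hL hR B
    simp only [ForcedTrue, ForcedFalse]
    constructor
    · rintro (h | h | h)
      exacts [hL _ h, .inr (.inl (ihA.2 h)), .inr (.inr (ihB.1 h))]
    · rintro (h | ⟨hA, hB⟩)
      exacts [hR _ h, .inr ⟨ihA.1 hA, ihB.2 hB⟩]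
  | .box A => by
    have ihA := forced_mono hL hR A
    refine ⟨hL _, ?_⟩
    rintro (h | h)
    exacts [hR _ h, .inr (ihA.2 h)]

theorem forced_holds {W : Type} [Preorder W] {val : ℕ → W → Prop} {w : W}
    (hw : FailsAt val (L, R) w) :
    ∀ C, (ForcedTrue L R C → Holds val C w) ∧ (ForcedFalse L R C → ¬ Holds val C w)
  | .bot => ⟨hw.1 _, fun _ h => h⟩
  | .atom _ => ⟨hw.1 _, hw.2 _⟩
  | .imp A B => by
    have ihA := forced_holds hw A
    have ihB := forced_holds hw B
    simp only [ForcedTrue, ForcedFalse]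
    constructor
    · rintro (h | h | h)
      exacts [hw.1 _ h, fun hA => absurd hA (ihA.2 h), fun _ => ihB.1 h]
    · rintro (h | ⟨hA, hB⟩)
      exacts [hw.2 _ h, fun hAB => ihB.2 hB (hAB (ihA.1 hA))]
  | .box A => by
    have ihA := forced_holds hw A
    refine ⟨hw.1 _, ?_⟩
    rintro (h | h)
    exacts [hw.2 _ h, fun hA => ihA.2 h (hA w le_rfl)]

def Forces (L R : Multiset Formula) (S : Sequent) : Prop :=
  (∀ X ∈ S.1, ForcedTrue L R X) ∧ ∀ X ∈ S.2, ForcedFalse L R X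

theorem Forces.valid {S : Sequent} (hF : Forces L R S) (hS : Valid S) : Valid (L, R) :=
  fun W _ _ val w hw => hS W val w
    ⟨fun X hX => (forced_holds hw X).1 (hF.1 X hX), fun X hX => (forced_holds hw X).2 (hF.2 X hX)⟩

end Forcing

/-- A state of backward proof search for the sequent `L ⇒ R`; `U` holds the antecedent
formulas to which (refl) may still be applied, so that it is applied once per boxed formula. -/
structure SearchState : Type where
  L : Multiset Formula
  R : Multiset Formula
  U : Multiset Formula

def SearchState.seq (st : SearchState) : Sequent := (st.L, st.R)

open Formula in
inductive Step : SearchState → Rule → Option SearchState → Option SearchState → Prop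
  | ax (p : ℕ) (L R U : Multiset Formula) : Step ⟨atom p ::ₘ L, atom p ::ₘ R, U⟩ .ax none none
  | axBot (L R U : Multiset Formula) : Step ⟨bot ::ₘ L, R, U⟩ .axBot none none
  | impL (A B : Formula) (L R U : Multiset Formula) :
      Step ⟨imp A B ::ₘ L, R, U⟩ .impL (some ⟨B ::ₘ L, R, B ::ₘ U⟩) (some ⟨L, A ::ₘ R, U⟩)
  | impR (A B : Formula) (L R U : Multiset Formula) :
      Step ⟨L, imp A B ::ₘ R, U⟩ .impR (some ⟨A ::ₘ L, B ::ₘ R, A ::ₘ U⟩) none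
  | refl (B : Formula) (L R U : Multiset Formula) :
      Step ⟨box B ::ₘ L, R, box B ::ₘ U⟩ .refl (some ⟨B ::ₘ box B ::ₘ L, R, B ::ₘ U⟩) none
  | box (A : Formula) (Γ P R U : Multiset Formula) (hP : Valid (boxed P, {A})) :
      Step ⟨Γ + boxed P, box A ::ₘ R, U⟩ .box (some ⟨Γ + boxed P, A ::ₘ R, U⟩)
        (some ⟨boxed P, {A}, boxed P⟩)

theorem Step.inst {st : SearchState} {r : Rule} {c₁ c₂ : Option SearchState}
    (h : Step st r c₁ c₂) : Inst r st.seq (c₁.map SearchState.seq) (c₂.map SearchState.seq) := by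
  cases h <;> constructor

def Formula.size : Formula → ℕ
  | .bot | .atom _ => 1
  | .imp A B => A.size + B.size + 1
  | .box A => A.size + 1

def Formula.impWeight : Formula → ℕ
  | .imp A B => A.size + B.size + 1
  | _ => 0

def Formula.boxWeight : Formula → ℕ
  | .box A => A.size + 1
  | _ => 0

theorem Formula.impWeight_add_boxWeight_le_size (A : Formula) :
    A.impWeight + A.boxWeight ≤ A.size := by
  cases A <;> simp [impWeight, boxWeight, size]

def SearchState.measure (st : SearchState) : ℕ :=
  (st.L.map Formula.impWeight).sum + (st.R.map fun X => X.impWeight + X.boxWeight).sum +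
    (st.U.map Formula.boxWeight).sum

theorem Step.measure_lt {st c : SearchState} {r : Rule} {c₁ c₂ : Option SearchState}
    (h : Step st r c₁ c₂) {i : Bool} (hc : (bif i then c₂ else c₁) = some c)
    (hi : i = false ∨ r ≠ .box) : c.measure < st.measure := by
  have hle := Formula.impWeight_add_boxWeight_le_size
  cases h with
  | ax | axBot => cases i <;> cases hc
  | impL A B L R U | impR A B L R U =>
    have : (Formula.imp A B).impWeight = A.size + B.size + 1 := rfl
    have : (Formula.imp A B).boxWeight = 0 := rfl
    have := hle A; have := hle B
    cases i <;> cases hc <;>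
      simp only [SearchState.measure, Multiset.map_cons, Multiset.sum_cons, Multiset.sum_map_add]
      <;> omega
  | refl A L R U | box A _ _ R U =>
    have : (Formula.box A).impWeight = 0 := rfl
    have : (Formula.box A).boxWeight = A.size + 1 := rfl
    have := hle A
    cases i <;> cases hc
    all_goals first
      | simp only [SearchState.measure, Multiset.map_cons, Multiset.sum_cons, Multiset.sum_map_add]
        omega
      | simp at hi

/-- The boxed antecedent formulas no longer in `U` had (refl) applied: their bodies are forced. -/
def SearchState.Inv (st : SearchState) : Prop :=
  Valid st.seq ∧ ∀ B, .box B ∈ st.L → .box B ∈ st.U ∨ ForcedTrue st.L st.R B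

theorem SearchState.Inv.of_forces {st c : SearchState} (h : st.Inv)
    (hF : Forces c.L c.R st.seq) (hL : ∀ B, .box B ∈ c.L → .box B ∈ st.L ∨ .box B ∈ c.U)
    (hU : ∀ B, .box B ∈ st.U → .box B ∈ c.U ∨ ForcedTrue c.L c.R B) : c.Inv := by
  refine ⟨hF.valid h.1, fun B hB => (hL B hB).elim (fun hst => ?_) .inl⟩
  exact (h.2 B hst).elim (hU B) fun hf => .inr ((forced_mono hF.1 hF.2 B).1 hf)

theorem Step.inv {st c : SearchState} {r : Rule} {c₁ c₂ : Option SearchState}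
    (h : Step st r c₁ c₂) (hst : st.Inv) {i : Bool} (hc : (bif i then c₂ else c₁) = some c) :
    c.Inv := by
  cases h with
  | box A Γ P R U hP =>
    cases i <;> cases hc
    · refine hst.of_forces ?_ (fun B hB => .inl hB) (fun B hB => .inl hB)
      simp +contextual only [Forces, SearchState.seq, Multiset.mem_cons, forall_eq_or_imp,
        ForcedFalse, forcedTrue_of_mem, forcedFalse_of_mem, or_true, true_or, implies_true,
        and_self]
    · exact ⟨hP, fun B hB => .inl hB⟩
  | _ =>
    -- e.g. the left premise of (→L) forces `B`, hence `A → B`, true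
    cases i <;> cases hc <;> refine hst.of_forces ?_ ?_ ?_ <;>
      simp +contextual only [Forces, SearchState.seq, Multiset.mem_cons, forall_eq_or_imp,
        ForcedTrue, ForcedFalse, forcedTrue_of_mem, forcedFalse_of_mem, Formula.box.injEq,
        reduceCtorEq, or_true, true_or, false_or, implies_true, and_self] <;> tauto

section Glue

variable {I : Type} {W : I → Type} [∀ i, PartialOrder (W i)]

/-- The models `W i` placed side by side above a new root `⊥`, where the atoms `v` hold. -/
def glueVal (v : ℕ → Prop) (val : ∀ i, ℕ → W i → Prop) : ℕ → WithBot (Σ i, W i) → Prop :=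
  fun p w => Option.elim w (v p) fun x => val x.1 p x.2

theorem holds_glueVal_coe (v : ℕ → Prop) (val : ∀ i, ℕ → W i → Prop) (i : I) (A : Formula)
    (y : W i) : Holds (glueVal v val) A ((⟨i, y⟩ : Σ i, W i) : WithBot (Σ i, W i)) ↔
      Holds (val i) A y := by
  refine (holds_comp_iff (fun y : W i => ((⟨i, y⟩ : Σ i, W i) : WithBot (Σ i, W i)))
    (fun _ _ h => WithBot.coe_le_coe.mpr (Sigma.mk_le_mk_iff.mpr h)) ?_ A y).symm
  rintro y (_ | ⟨j, z⟩) h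
  · exact absurd h (WithBot.not_coe_le_bot _)
  · rcases WithBot.coe_le_coe.mp h with ⟨_, _, z, hyz⟩
    exact ⟨z, hyz, rfl⟩

theorem holds_glueVal_bot_box (v : ℕ → Prop) (val : ∀ i, ℕ → W i → Prop) (A : Formula) :
    Holds (glueVal v val) (.box A) ⊥ ↔
      Holds (glueVal v val) A ⊥ ∧ ∀ i y, Holds (val i) A y := by
  simp only [Holds, WithBot.forall, bot_le, forall_const, Sigma.forall, holds_glueVal_coe]

end Glue

theorem exists_eq_add_boxed (L : Multiset Formula) :
    ∃ Γ P, L = Γ + boxed P ∧ ∀ C, .box C ∈ L → C ∈ P := by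
  induction L using Multiset.induction_on with
  | empty => exact ⟨0, 0, rfl, by simp⟩
  | cons X L ih =>
    obtain ⟨Γ, P, rfl, hP⟩ := ih
    by_cases hX : ∃ A, X = .box A
    · obtain ⟨A, rfl⟩ := hX
      refine ⟨Γ, A ::ₘ P, by simp [boxed], fun C hC => ?_⟩
      rcases Multiset.mem_cons.mp hC with h | h
      exacts [Multiset.mem_cons.mpr (.inl (Formula.box.inj h)), Multiset.mem_cons_of_mem (hP C h)]
    · refine ⟨X ::ₘ Γ, P, by simp, fun C hC => ?_⟩
      rcases Multiset.mem_cons.mp hC with h | h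
      exacts [(hX ⟨C, h.symm⟩).elim, hP C h]

theorem forced_holds_glueVal_bot {L R : Multiset Formula} {I : Type} {W : I → Type}
    [∀ i, PartialOrder (W i)] {val : ∀ i, ℕ → W i → Prop}
    (hatom : ∀ p, .atom p ∈ L → .atom p ∉ R) (hbot : .bot ∉ L)
    (himpL : ∀ A B, .imp A B ∉ L) (himpR : ∀ A B, .imp A B ∉ R)
    (hboxL : ∀ C, .box C ∈ L → ForcedTrue L R C ∧ ∀ i y, Holds (val i) C y)
    (hboxR : ∀ C, .box C ∈ R → ∃ i y, ¬ Holds (val i) C y) (C : Formula) :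
    (ForcedTrue L R C → Holds (glueVal (fun p => .atom p ∈ L) val) C ⊥) ∧
      (ForcedFalse L R C → ¬ Holds (glueVal (fun p => .atom p ∈ L) val) C ⊥) := by
  induction C with
  | bot => exact ⟨fun h => (hbot h).elim, fun _ h => h⟩
  | atom p => exact ⟨id, fun hR hL => hatom p hL hR⟩
  | imp A B ihA ihB =>
    simp only [ForcedTrue, ForcedFalse, Holds]
    constructor
    · rintro (h | h | h)
      exacts [(himpL A B h).elim, fun hA => (ihA.2 h hA).elim, fun _ => ihB.1 h]
    · rintro (h | ⟨hA, hB⟩)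
      exacts [(himpR A B h).elim, fun hAB => ihB.2 hB (hAB (ihA.1 hA))]
  | box C ih =>
    simp only [ForcedTrue, ForcedFalse, holds_glueVal_bot_box]
    constructor
    · intro h
      exact ⟨ih.1 (hboxL C h).1, (hboxL C h).2⟩
    · rintro (h | h) ⟨hC, hall⟩
      · obtain ⟨i, y, hy⟩ := hboxR C h
        exact hy (hall i y)
      · exact ih.2 h hC

/-- A stuck search state is refutable: glue countermodels of the unprovable □-premises
`□P ⇒ A` above a new root where exactly the atoms of the antecedent hold. -/
theorem SearchState.not_valid_of_stuck {st : SearchState}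
    (hU : ∀ B, .box B ∈ st.L → .box B ∈ st.U ∨ ForcedTrue st.L st.R B)
    (hstuck : ∀ r c₁ c₂, ¬ Step st r c₁ c₂) : ¬ Valid st.seq := by
  obtain ⟨L, R, U⟩ := st
  obtain ⟨Γ, P, hLP, hP⟩ := exists_eq_add_boxed L
  have hatom (p : ℕ) (hL : .atom p ∈ L) (hR : .atom p ∈ R) : False := by
    obtain ⟨L', rfl⟩ := Multiset.exists_cons_of_mem hL
    obtain ⟨R', rfl⟩ := Multiset.exists_cons_of_mem hR
    exact hstuck _ _ _ (.ax p L' R' U)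
  have hbot (hL : .bot ∈ L) : False := by
    obtain ⟨L', rfl⟩ := Multiset.exists_cons_of_mem hL
    exact hstuck _ _ _ (.axBot L' R U)
  have himpL (A B : Formula) (hL : .imp A B ∈ L) : False := by
    obtain ⟨L', rfl⟩ := Multiset.exists_cons_of_mem hL
    exact hstuck _ _ _ (.impL A B L' R U)
  have himpR (A B : Formula) (hR : .imp A B ∈ R) : False := by
    obtain ⟨R', rfl⟩ := Multiset.exists_cons_of_mem hR
    exact hstuck _ _ _ (.impR A B L R' U)
  have hrefl (B : Formula) (hL : .box B ∈ L) (hBU : .box B ∈ U) : False := by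
    obtain ⟨L', rfl⟩ := Multiset.exists_cons_of_mem hL
    obtain ⟨U', rfl⟩ := Multiset.exists_cons_of_mem hBU
    exact hstuck _ _ _ (.refl B L' R U')
  have hbox (A : {A : Formula // .box A ∈ R}) : ¬ Valid (boxed P, {A.1}) := fun hv => by
    obtain ⟨R', hR'⟩ := Multiset.exists_cons_of_mem A.2
    have hstep := Step.box A.1 Γ P R' U hv
    rw [← hLP, ← hR'] at hstep
    exact hstuck _ _ _ hstep
  have : Finite {A : Formula // .box A ∈ R} :=
    Finite.of_injective (fun A => (⟨_, A.2⟩ : {X // X ∈ R})) fun A B h => by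
      simpa [Subtype.ext_iff] using h
  choose W _ _ val root hroot hfail using fun A => exists_rooted_countermodel (hbox A)
  have htruth := forced_holds_glueVal_bot (val := val) hatom hbot himpL himpR
    (fun C h => ⟨(hU C h).resolve_left (hrefl C h),
      fun A y => (hfail A).1 (.box C) (Multiset.mem_map_of_mem _ (hP C h)) y (hroot A y)⟩)
    (fun C h => ⟨⟨C, h⟩, root _, (hfail ⟨C, h⟩).2 C (Multiset.mem_singleton_self C)⟩)
  exact fun hvalid => hvalid _ _ ⊥ ⟨fun X hX => (htruth X).1 (forcedTrue_of_mem hX),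
    fun X hX => (htruth X).2 (forcedFalse_of_mem hX)⟩

theorem SearchState.Inv.exists_step {st : SearchState} (h : st.Inv) :
    ∃ r c₁ c₂, Step st r c₁ c₂ := by
  by_contra hstuck
  push Not at hstuck
  exact not_valid_of_stuck h.2 hstuck h.1

namespace SearchState

open Classical in
noncomputable def next (st : SearchState) :
    Option (Rule × Option SearchState × Option SearchState) :=
  if h : ∃ x : Rule × Option SearchState × Option SearchState, Step st x.1 x.2.1 x.2.2 then
    some h.choose
  else none

noncomputable def child (st : SearchState) (i : Bool) : Option SearchState :=
  st.next.bind fun x => bif i then x.2.2 else x.2.1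

noncomputable def lab : SearchState → Lab
  | st, [] => st.next.map fun x => (x.1, st.seq)
  | st, i :: a => (st.child i).bind fun c => lab c a

theorem step_of_next_eq_some {st : SearchState} {r : Rule} {c₁ c₂ : Option SearchState}
    (h : st.next = some (r, c₁, c₂)) : Step st r c₁ c₂ := by
  unfold next at h
  split_ifs at h with hex
  have := hex.choose_spec
  rwa [Option.some.inj h] at this

theorem Inv.next_eq_some {st : SearchState} (h : st.Inv) :
    ∃ r c₁ c₂, st.next = some (r, c₁, c₂) := by
  obtain ⟨r, c₁, c₂, hstep⟩ := h.exists_step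
  exact ⟨_, _, _, dif_pos ⟨(r, c₁, c₂), hstep⟩⟩

theorem Inv.child {st c : SearchState} (h : st.Inv) {i : Bool} (hc : st.child i = some c) :
    c.Inv := by
  obtain ⟨⟨r, c₁, c₂⟩, hnext, hc⟩ := Option.bind_eq_some_iff.mp hc
  exact (step_of_next_eq_some hnext).inv h hc

theorem measure_child_lt {st c : SearchState} {i : Bool} (hc : st.child i = some c)
    (hi : i = false ∨ (st.lab []).map Prod.fst ≠ some .box) : c.measure < st.measure := by
  obtain ⟨⟨r, c₁, c₂⟩, hnext, hc⟩ := Option.bind_eq_some_iff.mp hc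
  exact (step_of_next_eq_some hnext).measure_lt hc (by simpa [lab, hnext] using hi)

theorem lab_cons_of_child {st c : SearchState} {i : Bool} (hc : st.child i = some c)
    (a : List Bool) : st.lab (i :: a) = c.lab a := by
  simp [lab, hc]

theorem lab_cons_of_child_none {st : SearchState} {i : Bool} (hc : st.child i = none)
    (a : List Bool) : st.lab (i :: a) = none := by
  simp [lab, hc]

theorem lab_append_singleton_of_eq_none {st : SearchState} {a : List Bool} (h : st.lab a = none)
    (i : Bool) : st.lab (a ++ [i]) = none := by
  induction a generalizing st with
  | nil => simp_all [lab, child]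
  | cons j a ih =>
    cases hc : st.child j with
    | none => exact lab_cons_of_child_none hc _
    | some c =>
      rw [List.cons_append, lab_cons_of_child hc]
      exact ih (by rwa [← lab_cons_of_child hc])

theorem Inv.map_snd_lab_singleton {st : SearchState} (h : st.Inv) {r : Rule}
    {c₁ c₂ : Option SearchState} (hnext : st.next = some (r, c₁, c₂)) (i : Bool) :
    (st.lab [i]).map Prod.snd = (bif i then c₂ else c₁).map seq := by
  have hc : st.child i = bif i then c₂ else c₁ := by simp [SearchState.child, hnext]
  cases hci : bif i then c₂ else c₁ with
  | none => rw [lab_cons_of_child_none (hc.trans hci)]; rfl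
  | some c =>
    obtain ⟨r', c₁', c₂', hnext'⟩ := (h.child (hc.trans hci)).next_eq_some
    rw [lab_cons_of_child (hc.trans hci)]
    simp [lab, hnext']

theorem Inv.lab_step {st : SearchState} (h : st.Inv) (a : List Bool) {r : Rule} {s : Sequent}
    (hrs : st.lab a = some (r, s)) :
    Inst r s ((st.lab (a ++ [false])).map Prod.snd) ((st.lab (a ++ [true])).map Prod.snd) := by
  induction a generalizing st with
  | nil =>
    obtain ⟨⟨r, c₁, c₂⟩, hnext, hx⟩ := Option.map_eq_some_iff.mp hrs
    obtain ⟨rfl, rfl⟩ := Prod.mk.inj hx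
    simpa [h.map_snd_lab_singleton hnext] using (step_of_next_eq_some hnext).inst
  | cons j a ih =>
    cases hc : st.child j with
    | none => simp [lab_cons_of_child_none hc] at hrs
    | some c =>
      simp only [List.cons_append, lab_cons_of_child hc] at hrs ⊢
      exact ih (h.child hc) hrs

theorem exists_child_of_path {st : SearchState} {f : ℕ → Bool}
    (hf : ∀ n, (st.lab ((List.range n).map f)).isSome) :
    ∃ c, st.child (f 0) = some c ∧
      ∀ n, c.lab ((List.range n).map fun k => f (k + 1)) = st.lab ((List.range (n + 1)).map f) := by
  have hcons (n : ℕ) :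
      (List.range (n + 1)).map f = f 0 :: (List.range n).map fun k => f (k + 1) := by
    simp [List.range_succ_eq_map]
  cases hc : st.child (f 0) with
  | none => simpa [hcons, lab_cons_of_child_none hc] using hf 1
  | some c => exact ⟨c, rfl, fun n => by rw [hcons, lab_cons_of_child hc]⟩

theorem exists_box_right_of_path (st : SearchState) (f : ℕ → Bool)
    (hf : ∀ n, (st.lab ((List.range n).map f)).isSome) :
    ∃ n, f n = true ∧ (st.lab ((List.range n).map f)).map Prod.fst = some .box := by
  induction hm : st.measure using Nat.strong_induction_on generalizing st f with
  | _ m ih =>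
  by_cases hroot : f 0 = true ∧ (st.lab []).map Prod.fst = some .box
  · exact ⟨0, hroot⟩
  obtain ⟨c, hc, hpath⟩ := exists_child_of_path hf
  have hlt := measure_child_lt hc (by cases h0 : f 0 <;> simp_all)
  obtain ⟨n, hn, hbox⟩ := ih _ (hm ▸ hlt) c _ (fun n => hpath n ▸ hf (n + 1)) rfl
  exact ⟨n + 1, hn, hpath n ▸ hbox⟩

theorem lab_branch (st : SearchState) (f : ℕ → Bool)
    (hf : ∀ n, (st.lab ((List.range n).map f)).isSome) (N : ℕ) :
    ∃ n, N ≤ n ∧ f n = true ∧ (st.lab ((List.range n).map f)).map Prod.fst = some .box := by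
  induction N generalizing st f with
  | zero => simpa using exists_box_right_of_path st f hf
  | succ N ih =>
    obtain ⟨c, -, hpath⟩ := exists_child_of_path hf
    obtain ⟨n, hNn, hn, hbox⟩ := ih c _ (fun n => hpath n ▸ hf (n + 1))
    exact ⟨n + 1, by omega, hn, hpath n ▸ hbox⟩

theorem shift_lab {st c : SearchState} {i : Bool} (hc : st.child i = some c) :
    shift i st.lab = c.lab :=
  funext (lab_cons_of_child hc)

theorem memP_one_lab (st : SearchState) : MemP 1 st.lab := by
  induction hm : st.measure using Nat.strong_induction_on generalizing st with
  | _ m ih =>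
  have hchild (i : Bool) (hi : i = false ∨ (st.lab []).map Prod.fst ≠ some .box) (c : SearchState)
      (hc : st.child i = some c) : MemP 1 (shift i st.lab) :=
    shift_lab hc ▸ ih _ (hm ▸ measure_child_lt hc hi) c rfl
  have hleaf (h : ∀ i, st.child i = none) : MemP 1 st.lab :=
    .leaf 1 _ (height_eq_zero_of_forall_cons fun i => lab_cons_of_child_none (h i))
  cases hnext : st.next with
  | none => exact hleaf fun i => by simp [SearchState.child, hnext]
  | some x =>
    obtain ⟨r, c₁, c₂⟩ := x
    have hroot : st.lab [] = some (r, st.seq) := by simp [lab, hnext]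
    have hc (i : Bool) : st.child i = bif i then c₂ else c₁ := by simp [SearchState.child, hnext]
    cases step_of_next_eq_some hnext with
    | ax | axBot => exact hleaf fun i => by cases i <;> exact hc _
    | impL =>
      exact .bin 1 _ _ hroot (hchild false (.inl rfl) _ (hc false))
        (hchild true (.inr (by simp [hroot])) _ (hc true))
    | impR => exact .un 1 _ _ _ (.inl rfl) hroot (hchild false (.inl rfl) _ (hc false))
    | refl => exact .un 1 _ _ _ (.inr rfl) hroot (hchild false (.inl rfl) _ (hc false))
    | box => exact .box 0 _ _ hroot (hchild false (.inl rfl) _ (hc false)) (.zero _)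

noncomputable def proof (st : SearchState) (h : st.Inv) : InfProof where
  lab := st.lab
  root_some := by obtain ⟨r, c₁, c₂, hnext⟩ := h.next_eq_some; simp [lab, hnext]
  nojunk _ i h := lab_append_singleton_of_eq_none h i
  step a _ _ := h.lab_step a
  branch := st.lab_branch

end SearchState

theorem Valid.exists_P1_proves {S : Sequent} (h : Valid S) : ∃ q : P1, Proves q.1 S := by
  let st : SearchState := ⟨S.1, S.2, S.1⟩
  have hst : st.Inv := ⟨h, fun _ hB => .inl hB⟩
  obtain ⟨r, c₁, c₂, hnext⟩ := hst.next_eq_some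
  exact ⟨⟨st.proof hst, st.memP_one_lab⟩, r,
    by simp [SearchState.proof, SearchState.lab, SearchState.seq, st, hnext]⟩

theorem exists_P1_proves_of_cut {π₁ π₂ : InfProof} {Γ Δ : Multiset Formula} {A : Formula}
    (h₁ : Proves π₁ (Γ, A ::ₘ Δ)) (h₂ : Proves π₂ (A ::ₘ Γ, Δ)) : ∃ q : P1, Proves q.1 (Γ, Δ) := by
  refine Valid.exists_P1_proves fun W _ _ val w hw => ?_
  by_cases hA : Holds val A w
  · exact h₂.valid W val w (failsAt_cons_left.mpr ⟨hA, hw⟩)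
  · exact h₁.valid W val w (failsAt_cons_right.mpr ⟨hA, hw⟩)

theorem rootSeq_eq_of_proves {π : InfProof} {S : Sequent} (h : Proves π S) : rootSeq π = S := by
  obtain ⟨r, hr⟩ := h
  simp [rootSeq, hr]

/-- for every formula A there is an A-reducing mapping. -/
theorem exists_reducing (A : Formula) : ∃ R : P1 → P1 → P1, Reducing A R := by
  classical
  let target (p : P1) : Sequent := ((rootSeq p.1).1, (rootSeq p.1).2.erase A)
  refine ⟨fun p₁ _ => if h : ∃ q : P1, Proves q.1 (target p₁) then h.choose else p₁, ?_, ?_⟩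
  · rintro (_ | n) p₁ p₂ q₁ q₂ h₁ -
    · exact .zero _ _
    · have htarget : target p₁ = target q₁ := by simp only [target, rootSeq, h₁.root_eq]
      simp only [htarget]
      split_ifs
      exacts [sim_refl (InfProof.locallyCorrect _) _, h₁]
  · intro p₁ p₂ Γ Δ h₁ h₂
    have htarget : target p₁ = (Γ, Δ) := by simp [target, rootSeq_eq_of_proves h₁]
    have hq := exists_P1_proves_of_cut h₁ h₂
    simp only [htarget, dif_pos hq]
    exact hq.choose_spec
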